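/- arXiv:2312.06690 — 3 statements merged into one kernel-verified Lean document; each statement's English description precedes it below -/
import Mathlib

section
/- Let (A, 𝒜) be a measurable space and let f : A × ℝ × ℝⁿ → ℝ be 𝒜 ⊗ Borel-measurable, such that for every a ∈ A the function f(a,·,·) is concave and satisfies |f(a,y₁,z₁) − f(a,y₂,z₂)| ≤ C(|y₁ − y₂| + ‖z₁ − z₂‖) for all (y₁,z₁), (y₂,z₂) ∈ ℝ × ℝⁿ, with the same constant C > 0. Define F(a,β,γ) = sup_{(y,z) ∈ ℝ × ℝⁿ} ( f(a,y,z) − βy − γ·z ) ∈ ℝ ∪ {+∞}. Let Y : A → ℝ and Z : A → ℝⁿ be measurable. Then there exist measurable functions β̄ : A → [−C,C] and γ̄ : A → {γ ∈ ℝⁿ : ‖γ‖ ≤ C} such that for every a ∈ A, F(a, β̄(a), γ̄(a)) < ∞ and f(a, Y(a), Z(a)) = F(a, β̄(a), γ̄(a)) + β̄(a)·Y(a) + γ̄(a)·Z(a). Moreover, if μ is a measure on (A,𝒜) for which a ↦ f(a,Y(a),Z(a)), Y and Z are square-integrable, then a ↦ F(a, β̄(a), γ̄(a)) is μ-square-integrable.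 -/
/-!
A supergradient `(β, γ)` of the concave function `f a` at `(Y a, Z a)` is an optimal control:
the supremum defining `F a β γ` is then attained at `(Y a, Z a)`, so
`F a β γ = f a (Y a) (Z a) - β Y a - ⟪γ, Z a⟫`, which is finite and, for bounded `(β, γ)`,
square-integrable. Supergradients exist by Hahn–Banach, separating `(x, g x)` from the open
convex strict hypograph, and the Lipschitz bound confines them to the cube `|β|, ‖γ‖ ≤ C`.

Measurability is a Kuratowski–Ryll-Nardzewski argument. Testing the supergradient inequality
on a dense sequence of points cuts out the superdifferential by countably many Carathéodory
constraints, which fold into a single continuous sublevel condition. Distances to such sublevel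
sets are measurable by compactness of closed balls, and a measurable selection is the limit of
a Cauchy sequence of points of a dense sequence, each chosen by `Nat.find`.
-/

open MeasureTheory Metric Filter Topology
open scoped RealInnerProductSpace

section Supergradient

theorem ConcaveOn.convex_strictHypograph {V : Type*} [AddCommGroup V] [Module ℝ V] {g : V → ℝ}
    (hconc : ConcaveOn ℝ Set.univ g) : Convex ℝ {q : V × ℝ | q.2 < g q.1} := by
  rintro ⟨p, t⟩ (hp : t < g p) ⟨q, u⟩ (hq : u < g q) a b ha hb hab
  show a * t + b * u < g (a • p + b • q)
  calc a * t + b * u < a * g p + b * g q := by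
        rcases ha.eq_or_lt with rfl | ha
        · obtain rfl : b = 1 := by simpa using hab
          simpa using hq
        · nlinarith [mul_le_mul_of_nonneg_left hq.le hb]
    _ ≤ g (a • p + b • q) := hconc.2 trivial trivial ha hb hab

theorem ConcaveOn.exists_le_add_strongDual {V : Type*} [AddCommGroup V] [Module ℝ V]
    [TopologicalSpace V] [IsTopologicalAddGroup V] [ContinuousSMul ℝ V] {g : V → ℝ}
    (hconc : ConcaveOn ℝ Set.univ g) (hcont : Continuous g) (x : V) :
    ∃ ℓ : StrongDual ℝ V, ∀ p, g p ≤ g x + ℓ (p - x) := by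
  obtain ⟨L, hL⟩ := geometric_hahn_banach_open_point hconc.convex_strictHypograph
    (isOpen_lt continuous_snd (hcont.comp continuous_fst)) (x := (x, g x)) (lt_irrefl (g x) :)
  set c := L (0, 1)
  have hsplit : ∀ p t, L (p, t) = L (p, 0) + t * c := fun p t => by
    rw [← smul_eq_mul, ← L.map_smul, ← map_add]
    simp
  have hc : 0 < c := by
    have := hL (x, g x - 1) (sub_one_lt (g x) :)
    rw [hsplit x, hsplit x (g x)] at this
    linarith
  refine ⟨-c⁻¹ • L.comp (ContinuousLinearMap.inl ℝ V ℝ), fun p => le_of_forall_lt fun t ht => ?_⟩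
  have hpt := hL (p, t) ht
  rw [hsplit p, hsplit x] at hpt
  have hℓ : (-c⁻¹ • L.comp (ContinuousLinearMap.inl ℝ V ℝ)) (p - x) =
      (L (x, 0) - L (p, 0)) / c := by
    have hsub : L (p - x, 0) = L (p, 0) - L (x, 0) := by rw [← map_sub, Prod.mk_sub_mk, sub_zero]
    simp only [smul_apply, ContinuousLinearMap.comp_apply, ContinuousLinearMap.inl_apply, hsub,
      smul_eq_mul]
    field_simp
    ring
  rw [hℓ, ← sub_lt_iff_lt_add', lt_div_iff₀ hc]
  linarith

variable {E : Type*} [NormedAddCommGroup E]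

theorem continuous_of_abs_sub_le {g : ℝ × E → ℝ} {C : ℝ}
    (hLip : ∀ p q, |g p - g q| ≤ C * (|p.1 - q.1| + ‖p.2 - q.2‖)) : Continuous g := by
  refine continuous_iff_continuousAt.mpr fun q => tendsto_iff_dist_tendsto_zero.mpr ?_
  have hcont : Continuous fun p : ℝ × E => C * (|p.1 - q.1| + ‖p.2 - q.2‖) := by fun_prop
  have hlim : Tendsto (fun p : ℝ × E => C * (|p.1 - q.1| + ‖p.2 - q.2‖)) (𝓝 q) (𝓝 0) := by
    simpa using hcont.tendsto q
  exact squeeze_zero (fun _ => dist_nonneg) (fun p => hLip p q) hlim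

variable [InnerProductSpace ℝ E]

def superdifferential (g : ℝ × E → ℝ) (x : ℝ × E) : Set (ℝ × E) :=
  {v | ∀ p, g p ≤ g x + (v.1 * (p.1 - x.1) + ⟪v.2, p.2 - x.2⟫)}

variable {g : ℝ × E → ℝ} {x v : ℝ × E}

theorem ConcaveOn.superdifferential_nonempty [CompleteSpace E] (hconc : ConcaveOn ℝ Set.univ g)
    (hcont : Continuous g) (x : ℝ × E) : (superdifferential g x).Nonempty := by
  obtain ⟨ℓ, hℓ⟩ := hconc.exists_le_add_strongDual hcont x
  refine ⟨(ℓ (1, 0), (InnerProductSpace.toDual ℝ E).symm (ℓ.comp (.inr ℝ ℝ E))), fun p => ?_⟩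
  have hsplit : p - x = (p.1 - x.1) • ((1 : ℝ), (0 : E)) + (0, p.2 - x.2) := by
    ext <;> simp
  have hp := hℓ p
  rw [hsplit, map_add, map_smul, smul_eq_mul] at hp
  simpa [InnerProductSpace.toDual_symm_apply, mul_comm] using hp

theorem superdifferential_subset_closedBall {C : ℝ}
    (hLip : ∀ p q, |g p - g q| ≤ C * (|p.1 - q.1| + ‖p.2 - q.2‖)) :
    superdifferential g x ⊆ closedBall 0 C := by
  intro v hv
  -- testing `hv` at `x - (v.1, 0)` and `x - (0, v.2)` gives `v.1 ^ 2 ≤ C |v.1|`, `‖v.2‖ ^ 2 ≤ C ‖v.2‖`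
  have hC : 0 ≤ C := (abs_nonneg _).trans (by simpa using hLip (x.1 + 1, x.2) x)
  rw [mem_closedBall_zero_iff, Prod.norm_def, max_le_iff, Real.norm_eq_abs]
  constructor
  · have hsup := hv (x.1 - v.1, x.2)
    have hlip := hLip (x.1 - v.1, x.2) x
    simp only [sub_sub_cancel_left, sub_self, inner_zero_right, add_zero, norm_zero,
      abs_neg] at hsup hlip
    nlinarith [neg_abs_le (g (x.1 - v.1, x.2) - g x), sq_abs v.1, abs_nonneg v.1]
  · have hsup := hv (x.1, x.2 - v.2)
    have hlip := hLip (x.1, x.2 - v.2) x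
    simp only [sub_sub_cancel_left, sub_self, inner_neg_right, real_inner_self_eq_norm_sq,
      mul_zero, zero_add, abs_zero, norm_neg] at hsup hlip
    nlinarith [neg_abs_le (g (x.1, x.2 - v.2) - g x), norm_nonneg v.2]

theorem mem_superdifferential_iff_of_denseRange {ι : Type*} {e : ι → ℝ × E} (he : DenseRange e)
    (hg : Continuous g) :
    v ∈ superdifferential g x ↔
      ∀ j, g (e j) ≤ g x + (v.1 * ((e j).1 - x.1) + ⟪v.2, (e j).2 - x.2⟫) :=
  ⟨fun hv j => hv (e j), fun h p => he.induction_on p (isClosed_le hg (by fun_prop)) h⟩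

theorem iSup_eq_of_mem_superdifferential (hv : v ∈ superdifferential g x) :
    ⨆ p : ℝ × E, ((g p - v.1 * p.1 - ⟪v.2, p.2⟫ : ℝ) : EReal) =
      ((g x - (v.1 * x.1 + ⟪v.2, x.2⟫) : ℝ) : EReal) := by
  refine le_antisymm (iSup_le fun p => EReal.coe_le_coe_iff.mpr ?_)
    (le_iSup_of_le x (EReal.coe_le_coe_iff.mpr (sub_sub _ _ _).ge))
  have hp := hv p
  rw [inner_sub_right] at hp
  linarith

end Supergradient

section TruncatedSum

variable {X : Type*}

/-- Folds the countably many conditions `Φ j x ≤ 0` into one; the truncation at `1` makes the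
series converge uniformly, so continuity and measurability pass to the sum. -/
noncomputable def truncatedSum (Φ : ℕ → X → ℝ) (x : X) : ℝ :=
  ∑' j, (1 / 2 : ℝ) ^ j * min (max (Φ j x) 0) 1

variable {Φ : ℕ → X → ℝ}

lemma truncatedSum_term_nonneg (x : X) (j : ℕ) :
    0 ≤ (1 / 2 : ℝ) ^ j * min (max (Φ j x) 0) 1 := by
  positivity

lemma truncatedSum_term_le (x : X) (j : ℕ) :
    (1 / 2 : ℝ) ^ j * min (max (Φ j x) 0) 1 ≤ (1 / 2) ^ j :=
  mul_le_of_le_one_right (by positivity) (min_le_right _ _)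

lemma summable_truncatedSum (x : X) :
    Summable fun j => (1 / 2 : ℝ) ^ j * min (max (Φ j x) 0) 1 :=
  summable_geometric_two.of_nonneg_of_le (truncatedSum_term_nonneg x) (truncatedSum_term_le x)

lemma truncatedSum_le_zero_iff {x : X} : truncatedSum Φ x ≤ 0 ↔ ∀ j, Φ j x ≤ 0 := by
  constructor
  · intro h j
    by_contra! hj
    have hpos : 0 < (1 / 2 : ℝ) ^ j * min (max (Φ j x) 0) 1 := by
      have : 0 < min (max (Φ j x) 0) 1 := lt_min (lt_max_of_lt_left hj) one_pos
      positivity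
    exact h.not_gt ((summable_truncatedSum x).tsum_pos (truncatedSum_term_nonneg x) j hpos)
  · intro h
    have hzero : ∀ j, (1 / 2 : ℝ) ^ j * min (max (Φ j x) 0) 1 = 0 := fun j => by
      rw [max_eq_right (h j), min_eq_left zero_le_one, mul_zero]
    rw [truncatedSum, tsum_congr hzero, tsum_zero]

lemma continuous_truncatedSum [TopologicalSpace X] (hΦ : ∀ j, Continuous (Φ j)) :
    Continuous (truncatedSum Φ) :=
  continuous_tsum (fun j => continuous_const.mul (((hΦ j).max continuous_const).min
    continuous_const)) summable_geometric_two fun j x => by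
      rw [Real.norm_of_nonneg (truncatedSum_term_nonneg x j)]
      exact truncatedSum_term_le x j

lemma measurable_truncatedSum [MeasurableSpace X] (hΦ : ∀ j, Measurable (Φ j)) :
    Measurable (truncatedSum Φ) :=
  measurable_of_tendsto_metrizable
    (fun m => Finset.measurable_sum (Finset.range m) fun j _ =>
      (((hΦ j).max measurable_const).min measurable_const).const_mul _)
    (tendsto_pi_nhds.mpr fun x => (summable_truncatedSum x).hasSum.tendsto_sum_nat)

end TruncatedSum

section ApproximateSelection

theorem DenseRange.exists_infDist_lt_and_dist_lt {V ι : Type*} [PseudoMetricSpace V]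
    {e : ι → V} (he : DenseRange e) {s : Set V} (hs : s.Nonempty) (x : V) {ε : ℝ}
    (hε : 0 < ε) : ∃ i, infDist (e i) s < ε ∧ dist (e i) x < infDist x s + 2 * ε := by
  obtain ⟨w, hws, hw⟩ := (infDist_lt_iff hs).mp (lt_add_of_pos_right (infDist x s) hε)
  obtain ⟨i, hi⟩ := he.exists_dist_lt w hε
  refine ⟨i, (infDist_le_dist_of_mem hws).trans_lt (by rwa [dist_comm]), ?_⟩
  calc dist (e i) x ≤ dist (e i) w + dist x w := dist_triangle_right _ _ _
    _ < ε + (infDist x s + ε) := add_lt_add (by rwa [dist_comm]) hw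
    _ = infDist x s + 2 * ε := by ring

variable {A V : Type*} [MetricSpace V] {e : ℕ → V} (he : DenseRange e)
  {S : A → Set V} (hne : ∀ a, (S a).Nonempty)

open Classical in
/-- Bounding the step by `infDist x (S a) + 2ε` rather than by a fixed tolerance makes every
step solvable, so the recursion carries no invariant. -/
noncomputable def selectionApprox : ℕ → A → V
  | 0, _ => e 0
  | j + 1, a => e (Nat.find (he.exists_infDist_lt_and_dist_lt (hne a) (selectionApprox j a)
      (pow_pos (one_half_pos (α := ℝ)) j)))

lemma infDist_selectionApprox_succ_lt (j : ℕ) (a : A) :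
    infDist (selectionApprox he hne (j + 1) a) (S a) < (1 / 2) ^ j :=
  (Nat.find_spec (he.exists_infDist_lt_and_dist_lt (hne a) (selectionApprox he hne j a)
    (pow_pos (one_half_pos (α := ℝ)) j))).1

lemma dist_selectionApprox_succ_lt (j : ℕ) (a : A) :
    dist (selectionApprox he hne (j + 1) a) (selectionApprox he hne j a) <
      infDist (selectionApprox he hne j a) (S a) + 2 * (1 / 2) ^ j :=
  (Nat.find_spec (he.exists_infDist_lt_and_dist_lt (hne a) (selectionApprox he hne j a)
    (pow_pos (one_half_pos (α := ℝ)) j))).2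

lemma measurable_selectionApprox [MeasurableSpace A] [MeasurableSpace V] [BorelSpace V]
    [SecondCountableTopology V] (hmeas : ∀ v, Measurable fun a => infDist v (S a)) (j : ℕ) :
    Measurable (selectionApprox he hne j) := by
  have hjoint : Measurable fun q : V × A => infDist q.1 (S q.2) :=
    measurable_uncurry_of_continuous_of_measurable (u := fun v a => infDist v (S a))
      (fun a => continuous_infDist_pt (S a)) hmeas
  induction j with
  | zero => exact measurable_const
  | succ j ih =>
    have hdist : Measurable fun a => infDist (selectionApprox he hne j a) (S a) :=
      (hjoint.comp (ih.prodMk measurable_id) :)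
    simp only [selectionApprox]
    exact Measurable.find (f := fun i _ => e i)
      (p := fun i a => infDist (e i) (S a) < (1 / 2) ^ j ∧
        dist (e i) (selectionApprox he hne j a) <
          infDist (selectionApprox he hne j a) (S a) + 2 * (1 / 2) ^ j)
      (fun i => measurable_const) (fun i =>
        (measurableSet_lt (hmeas (e i)) measurable_const).inter
          (measurableSet_lt (measurable_const.dist ih) (hdist.add_const _))) _

lemma cauchySeq_selectionApprox_succ (a : A) :
    CauchySeq fun j => selectionApprox he hne (j + 1) a := by
  refine cauchySeq_of_le_geometric (1 / 2) 2 one_half_lt_one fun j => ?_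
  rw [dist_comm]
  calc _ ≤ infDist (selectionApprox he hne (j + 1) a) (S a) + 2 * (1 / 2) ^ (j + 1) :=
        (dist_selectionApprox_succ_lt he hne (j + 1) a).le
    _ ≤ (1 / 2) ^ j + 2 * (1 / 2) ^ (j + 1) := by
        gcongr
        exact (infDist_selectionApprox_succ_lt he hne j a).le
    _ = 2 * (1 / 2) ^ j := by ring

end ApproximateSelection

section MeasurableSelection

variable {A V : Type*} [MeasurableSpace A] [MetricSpace V]

theorem exists_measurable_selection_of_measurable_infDist [CompleteSpace V]
    [SecondCountableTopology V] [MeasurableSpace V] [BorelSpace V] {S : A → Set V}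
    (hclosed : ∀ a, IsClosed (S a)) (hne : ∀ a, (S a).Nonempty)
    (hmeas : ∀ v, Measurable fun a => infDist v (S a)) :
    ∃ σ : A → V, Measurable σ ∧ ∀ a, σ a ∈ S a := by
  rcases isEmpty_or_nonempty A with hA | ⟨⟨a₀⟩⟩
  · exact ⟨isEmptyElim, measurable_of_empty _, isEmptyElim⟩
  have : Nonempty V := (hne a₀).to_subtype.map Subtype.val
  have he := TopologicalSpace.denseRange_denseSeq V
  choose σ hσ using fun a =>
    cauchySeq_tendsto_of_complete (cauchySeq_selectionApprox_succ he hne a)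
  refine ⟨σ, measurable_of_tendsto_metrizable
    (fun j => measurable_selectionApprox he hne hmeas (j + 1)) (tendsto_pi_nhds.mpr hσ),
    fun a => ?_⟩
  rw [(hclosed a).mem_iff_infDist_zero (hne a)]
  exact le_antisymm (le_of_tendsto_of_tendsto'
    (((continuous_infDist_pt (S a)).tendsto (σ a)).comp (hσ a))
    (tendsto_pow_atTop_nhds_zero_of_lt_one one_half_pos.le one_half_lt_one)
    fun j => (infDist_selectionApprox_succ_lt he hne j a).le) infDist_nonneg

theorem IsCompact.measurableSet_setOf_exists_le_zero {K : Set V} (hK : IsCompact K)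
    {G : A → V → ℝ} (hGc : ∀ a, Continuous (G a)) (hGm : ∀ v, Measurable fun a => G a v) :
    MeasurableSet {a | ∃ w ∈ K, G a w ≤ 0} := by
  obtain ⟨t, htK, htc, hKt⟩ := hK.isSeparable.exists_countable_dense_subset
  have : {a | ∃ w ∈ K, G a w ≤ 0} = ⋂ k : ℕ, ⋃ s ∈ t, {a | G a s < 1 / (k + 1)} := by
    ext a
    simp only [Set.mem_ofPred_eq, Set.mem_iInter, Set.mem_iUnion, exists_prop]
    constructor
    · rintro ⟨w, hwK, hw⟩ k
      obtain ⟨s, hs, hst⟩ := mem_closure_iff.mp (hKt hwK) _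
        (isOpen_lt (hGc a) continuous_const) (hw.trans_lt Nat.one_div_pos_of_nat)
      exact ⟨s, hst, hs⟩
    · intro h
      obtain ⟨s₀, hs₀, -⟩ := h 0
      obtain ⟨w, hwK, hmin⟩ := hK.exists_isMinOn ⟨s₀, htK hs₀⟩ (hGc a).continuousOn
      refine ⟨w, hwK, le_of_not_gt fun hpos => ?_⟩
      obtain ⟨k, hk⟩ := exists_nat_one_div_lt hpos
      obtain ⟨s, hs, hsk⟩ := h k
      exact (hmin (htK hs)).not_gt (hsk.trans hk)
  rw [this]
  exact .iInter fun k => .biUnion htc fun s _ => measurableSet_lt (hGm s) measurable_const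

variable [ProperSpace V] {G : A → V → ℝ}

theorem measurable_infDist_setOf_le_zero (hGc : ∀ a, Continuous (G a))
    (hGm : ∀ v, Measurable fun a => G a v) (hne : ∀ a, {w | G a w ≤ 0}.Nonempty) (v : V) :
    Measurable fun a => infDist v {w | G a w ≤ 0} := by
  refine measurable_of_Iic fun r => ?_
  have : (fun a => infDist v {w | G a w ≤ 0}) ⁻¹' Set.Iic r =
      {a | ∃ w ∈ closedBall v r, G a w ≤ 0} := by
    ext a
    constructor
    · intro h
      obtain ⟨w, hw, hd⟩ :=
        (isClosed_le (hGc a) continuous_const).exists_infDist_eq_dist (hne a) v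
      exact ⟨w, Metric.mem_closedBall'.mpr (hd ▸ h), hw⟩
    · rintro ⟨w, hwr, hw⟩
      exact (infDist_le_dist_of_mem (s := {w | G a w ≤ 0}) hw).trans
        (Metric.mem_closedBall'.mp hwr)
  rw [this]
  exact (isCompact_closedBall v r).measurableSet_setOf_exists_le_zero hGc hGm

theorem exists_measurable_selection_of_forall_le_zero [MeasurableSpace V] [BorelSpace V]
    {Φ : ℕ → A → V → ℝ} (hΦc : ∀ j a, Continuous (Φ j a))
    (hΦm : ∀ j w, Measurable fun a => Φ j a w) (hne : ∀ a, {w | ∀ j, Φ j a w ≤ 0}.Nonempty) :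
    ∃ σ : A → V, Measurable σ ∧ ∀ a j, Φ j a (σ a) ≤ 0 := by
  set G : A → V → ℝ := fun a => truncatedSum fun j => Φ j a
  have hGc : ∀ a, Continuous (G a) := fun a => continuous_truncatedSum (hΦc · a)
  have hGm : ∀ w, Measurable fun a => G a w := fun w =>
    measurable_truncatedSum (Φ := fun j a => Φ j a w) (hΦm · w)
  have hS : ∀ a, {w | G a w ≤ 0} = {w | ∀ j, Φ j a w ≤ 0} := fun a =>
    Set.ext fun w => truncatedSum_le_zero_iff
  have hGne : ∀ a, {w | G a w ≤ 0}.Nonempty := fun a => hS a ▸ hne a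
  obtain ⟨σ, hσm, hσ⟩ := exists_measurable_selection_of_measurable_infDist
    (fun a => isClosed_le (hGc a) continuous_const) hGne
    (measurable_infDist_setOf_le_zero hGc hGm hGne)
  exact ⟨σ, hσm, fun a => (hS a ▸ hσ a :)⟩

end MeasurableSelection

theorem exists_measurable_mem_superdifferential {A E : Type*} [MeasurableSpace A]
    [NormedAddCommGroup E] [InnerProductSpace ℝ E] [FiniteDimensional ℝ E] [MeasurableSpace E]
    [BorelSpace E] {g : A → ℝ × E → ℝ} (hg : Measurable (Function.uncurry g))
    (hconc : ∀ a, ConcaveOn ℝ Set.univ (g a)) (hcont : ∀ a, Continuous (g a))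
    {x : A → ℝ × E} (hx : Measurable x) :
    ∃ σ : A → ℝ × E, Measurable σ ∧ ∀ a, σ a ∈ superdifferential (g a) (x a) := by
  have he := TopologicalSpace.denseRange_denseSeq (ℝ × E)
  set e := TopologicalSpace.denseSeq (ℝ × E)
  obtain ⟨σ, hσm, hσ⟩ := exists_measurable_selection_of_forall_le_zero
    (Φ := fun j a v =>
      g a (e j) - (g a (x a) + (v.1 * ((e j).1 - (x a).1) + ⟪v.2, (e j).2 - (x a).2⟫)))
    (fun j a => by fun_prop)
    (fun j v => (hg.comp (measurable_id.prodMk measurable_const)).sub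
      ((hg.comp (measurable_id.prodMk hx)).add (((measurable_const.sub hx.fst).const_mul _).add
        (measurable_const.inner (measurable_const.sub hx.snd)))))
    (fun a => ((hconc a).superdifferential_nonempty (hcont a) _).mono fun v hv j =>
      sub_nonpos.mpr ((mem_superdifferential_iff_of_denseRange he (hcont a)).mp hv j))
  exact ⟨σ, hσm, fun a =>
    (mem_superdifferential_iff_of_denseRange he (hcont a)).mpr fun j => sub_nonpos.mp (hσ a j)⟩

theorem MeasureTheory.MemLp.mul_add_inner_of_bounded {A E : Type*} {_ : MeasurableSpace A}
    {μ : Measure A} [NormedAddCommGroup E] [InnerProductSpace ℝ E] {p : ENNReal} {C : ℝ}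
    {β Y : A → ℝ} {γ Z : A → E} (hβ : AEStronglyMeasurable β μ) (hγ : AEStronglyMeasurable γ μ)
    (hβC : ∀ a, |β a| ≤ C) (hγC : ∀ a, ‖γ a‖ ≤ C) (hY : MemLp Y p μ) (hZ : MemLp Z p μ) :
    MemLp (fun a => β a * Y a + ⟪γ a, Z a⟫) p μ := by
  refine (hY.of_le_mul (c := C) (hβ.mul hY.1) (ae_of_all _ fun a => ?_)).add
    (hZ.of_le_mul (c := C) (hγ.inner hZ.1) (ae_of_all _ fun a => ?_))
  · rw [Pi.mul_apply, norm_mul, Real.norm_eq_abs]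
    exact mul_le_mul_of_nonneg_right (hβC a) (norm_nonneg _)
  · exact (norm_inner_le_norm _ _).trans (mul_le_mul_of_nonneg_right (hγC a) (norm_nonneg _))

theorem optimal_control_selection_general
    {A : Type*} [MeasurableSpace A] (n : ℕ) (C : ℝ)
    (f : A → ℝ → EuclideanSpace ℝ (Fin n) → ℝ)
    (hf_meas : Measurable fun q : A × ℝ × EuclideanSpace ℝ (Fin n) =>
      f q.1 q.2.1 q.2.2)
    (hconc : ∀ a, ConcaveOn ℝ Set.univ
      (fun p : ℝ × EuclideanSpace ℝ (Fin n) => f a p.1 p.2))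
    (hLip : ∀ a, ∀ (y₁ y₂ : ℝ) (z₁ z₂ : EuclideanSpace ℝ (Fin n)),
      |f a y₁ z₁ - f a y₂ z₂| ≤ C * (|y₁ - y₂| + ‖z₁ - z₂‖))
    (F : A → ℝ → EuclideanSpace ℝ (Fin n) → EReal)
    (hF : ∀ a β γ, F a β γ =
      ⨆ p : ℝ × EuclideanSpace ℝ (Fin n),
        ((f a p.1 p.2 - β * p.1 - ⟪γ, p.2⟫ : ℝ) : EReal))
    (Y : A → ℝ) (hY : Measurable Y)
    (Z : A → EuclideanSpace ℝ (Fin n)) (hZ : Measurable Z) :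
    ∃ (βb : A → ℝ) (γb : A → EuclideanSpace ℝ (Fin n)),
      Measurable βb ∧ Measurable γb ∧
      (∀ a, |βb a| ≤ C ∧ ‖γb a‖ ≤ C ∧ F a (βb a) (γb a) < ⊤ ∧
        ((f a (Y a) (Z a) : ℝ) : EReal) =
          F a (βb a) (γb a) + ((βb a * Y a + ⟪γb a, Z a⟫ : ℝ) : EReal)) ∧
      (∀ μ : Measure A,
        MemLp (fun a => f a (Y a) (Z a)) 2 μ → MemLp Y 2 μ → MemLp Z 2 μ →
        MemLp (fun a => (F a (βb a) (γb a)).toReal) 2 μ) := by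
  set g : A → ℝ × EuclideanSpace ℝ (Fin n) → ℝ := fun a p => f a p.1 p.2
  have hLip' : ∀ a p q, |g a p - g a q| ≤ C * (|p.1 - q.1| + ‖p.2 - q.2‖) :=
    fun a p q => hLip a _ _ _ _
  obtain ⟨σ, hσm, hσS⟩ := exists_measurable_mem_superdifferential hf_meas hconc
    (fun a => continuous_of_abs_sub_le (hLip' a)) (hY.prodMk hZ)
  have hFσ : ∀ a, F a (σ a).1 (σ a).2 =
      ((f a (Y a) (Z a) - ((σ a).1 * Y a + ⟪(σ a).2, Z a⟫) : ℝ) : EReal) := fun a =>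
    (hF _ _ _).trans (iSup_eq_of_mem_superdifferential (hσS a))
  have hσC : ∀ a, |(σ a).1| ≤ C ∧ ‖(σ a).2‖ ≤ C := fun a => by
    simpa [Prod.norm_def] using superdifferential_subset_closedBall (hLip' a) (hσS a)
  refine ⟨fun a => (σ a).1, fun a => (σ a).2, hσm.fst, hσm.snd, fun a =>
    ⟨(hσC a).1, (hσC a).2, hFσ a ▸ EReal.coe_lt_top _,
      by rw [hFσ a, ← EReal.coe_add, sub_add_cancel]⟩, fun μ hfYZ hY₂ hZ₂ => ?_⟩
  simp_rw [hFσ, EReal.toReal_coe]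
  exact hfYZ.sub (MemLp.mul_add_inner_of_bounded hσm.fst.aestronglyMeasurable
    hσm.snd.aestronglyMeasurable (fun a => (hσC a).1) (fun a => (hσC a).2) hY₂ hZ₂)

/-- Measurable selection of an optimal control parameter for a concave standard
driver: there is a measurable `(β̄, γ̄)` with values in the cube, lying in the
effective domain of the polar `F`, attaining the conjugacy relation along
`(Y, Z)`; moreover `a ↦ F(a, β̄ a, γ̄ a)` is square-integrable whenever
`f(·, Y, Z)`, `Y` and `Z` are. -/
theorem optimal_control_selection
    {A : Type*} [MeasurableSpace A] (n : ℕ) (C : ℝ) (hC : 0 < C)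
    (f : A → ℝ → EuclideanSpace ℝ (Fin n) → ℝ)
    (hf_meas : Measurable fun q : A × ℝ × EuclideanSpace ℝ (Fin n) =>
      f q.1 q.2.1 q.2.2)
    (hconc : ∀ a, ConcaveOn ℝ Set.univ
      (fun p : ℝ × EuclideanSpace ℝ (Fin n) => f a p.1 p.2))
    (hLip : ∀ a, ∀ (y₁ y₂ : ℝ) (z₁ z₂ : EuclideanSpace ℝ (Fin n)),
      |f a y₁ z₁ - f a y₂ z₂| ≤ C * (|y₁ - y₂| + ‖z₁ - z₂‖))
    (F : A → ℝ → EuclideanSpace ℝ (Fin n) → EReal)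
    (hF : ∀ a β γ, F a β γ =
      ⨆ p : ℝ × EuclideanSpace ℝ (Fin n),
        ((f a p.1 p.2 - β * p.1 - ⟪γ, p.2⟫ : ℝ) : EReal))
    (Y : A → ℝ) (hY : Measurable Y)
    (Z : A → EuclideanSpace ℝ (Fin n)) (hZ : Measurable Z) :
    ∃ (βb : A → ℝ) (γb : A → EuclideanSpace ℝ (Fin n)),
      Measurable βb ∧ Measurable γb ∧
      (∀ a, |βb a| ≤ C ∧ ‖γb a‖ ≤ C ∧ F a (βb a) (γb a) < ⊤ ∧
        ((f a (Y a) (Z a) : ℝ) : EReal) =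
          F a (βb a) (γb a) + ((βb a * Y a + ⟪γb a, Z a⟫ : ℝ) : EReal)) ∧
      (∀ μ : Measure A,
        MemLp (fun a => f a (Y a) (Z a)) 2 μ → MemLp Y 2 μ → MemLp Z 2 μ →
        MemLp (fun a => (F a (βb a) (γb a)).toReal) 2 μ) :=
  optimal_control_selection_general n C f hf_meas hconc hLip F hF Y hY Z hZ
end

section
/- Let (A, 𝒜) be a measurable space, let θ : A → ℝⁿ and σ : A → ℝ^{d×n} be measurable, and let C̃ ⊆ ℝ^d be a nonempty closed set. Suppose there exists ε > 0 such that ‖σ(x)^T v‖ ≥ ε‖v‖ for all x ∈ A and all v ∈ ℝ^d. Then there exists a measurable function ρ̂ : A → ℝⁿ such that for every x ∈ A, ρ̂(x) ∈ σ(x)^T(C̃) and ‖ρ̂(x) − θ(x)‖ = dist(θ(x), σ(x)^T(C̃)). Moreover, if in addition there are constants M, K > 0 with ‖θ(x)‖ ≤ M and ‖σ(x)^T v‖ ≤ K‖v‖ for all x ∈ A, v ∈ ℝ^d, and c₀ ∈ C̃ is any fixed point, then ‖ρ̂(x)‖ ≤ 2M + K‖c₀‖ for all x ∈ A. -/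
/-!
The nearest points of `σ(x)ᵀ C̃` to `θ(x)` are the images of the minimisers over `C̃` of
`c ↦ dist θ(x) (σ(x)ᵀ c)`, which is continuous in `c`, measurable in `x` and, by ellipticity,
coercive. Its argmin multifunction therefore has nonempty closed values, and whether it meets a
ball is decided by countably many comparisons along a dense sequence of `C̃`; so it is weakly
measurable and the Kuratowski–Ryll-Nardzewski theorem gives a measurable selection. The bound is
the triangle inequality `‖ρ̂‖ ≤ ‖θ‖ + dist θ ρ̂ ≤ ‖θ‖ + dist θ (σᵀ c₀) ≤ 2M + K‖c₀‖`.
-/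

open Matrix Set Metric Filter

section MeasurableSelection

variable {A X : Type*} [MeasurableSpace A] [MetricSpace X]

lemma exists_measurable_nat_of_forall_exists {p : A → ℕ → Prop} (h : ∀ x, ∃ i, p x i)
    (hp : ∀ i, MeasurableSet {x | p x i}) : ∃ f : A → ℕ, Measurable f ∧ ∀ x, p x (f x) := by
  classical
  exact ⟨fun x => Nat.find (h x), measurable_find h hp, fun x => Nat.find_spec (h x)⟩

variable {u : ℕ → X} {F : A → Set X}

lemma exists_measurable_refine (hu : DenseRange u)
    (hF : ∀ y r, MeasurableSet {x | (F x ∩ ball y r).Nonempty})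
    {f : A → ℕ} (hf : Measurable f) {r s : ℝ} (hs : 0 < s)
    (hfF : ∀ x, (F x ∩ ball (u (f x)) r).Nonempty) :
    ∃ f' : A → ℕ, Measurable f' ∧ (∀ x, (F x ∩ ball (u (f' x)) s).Nonempty) ∧
      ∀ x, dist (u (f x)) (u (f' x)) < r + s := by
  have hex : ∀ x, ∃ i, (F x ∩ ball (u i) s).Nonempty ∧ dist (u (f x)) (u i) < r + s := by
    intro x
    obtain ⟨c, hcF, hcr⟩ := hfF x
    obtain ⟨i, hi⟩ := hu.exists_dist_lt c hs
    refine ⟨i, ⟨c, hcF, mem_ball.2 hi⟩, ?_⟩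
    calc dist (u (f x)) (u i) ≤ dist (u (f x)) c + dist c (u i) := dist_triangle _ _ _
      _ < r + s := add_lt_add (mem_ball'.1 hcr) hi
  obtain ⟨f', hf', hf'F⟩ := exists_measurable_nat_of_forall_exists hex
    fun i => (hF _ _).inter (hf (MeasurableSet.of_discrete (s := {j | dist (u j) (u i) < r + s})))
  exact ⟨f', hf', fun x => (hf'F x).1, fun x => (hf'F x).2⟩

lemma exists_measurable_approx_seq (hu : DenseRange u) (hne : ∀ x, (F x).Nonempty)
    (hF : ∀ y r, MeasurableSet {x | (F x ∩ ball y r).Nonempty}) :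
    ∃ f : ℕ → A → ℕ, (∀ j, Measurable (f j)) ∧
      (∀ j x, (F x ∩ ball (u (f j x)) ((1 / 2) ^ j)).Nonempty) ∧
      ∀ j x, dist (u (f j x)) (u (f (j + 1) x)) ≤ 4 / 2 / 2 ^ j := by
  have hex : ∀ x, ∃ i, (F x ∩ ball (u i) 1).Nonempty := fun x =>
    let ⟨c, hc⟩ := hne x
    let ⟨i, hi⟩ := hu.exists_dist_lt c one_pos
    ⟨i, c, hc, mem_ball.2 hi⟩
  obtain ⟨f₀, hf₀, hf₀F⟩ := exists_measurable_nat_of_forall_exists hex fun i => hF _ _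
  choose! next hnext_meas hnextF hnext_dist using
    fun (j : ℕ) (f : A → ℕ) (hf : Measurable f)
      (hfF : ∀ x, (F x ∩ ball (u (f x)) ((1 / 2) ^ j)).Nonempty) =>
    exists_measurable_refine hu hF hf (s := (1 / 2) ^ (j + 1)) (by positivity) hfF
  let f : ℕ → A → ℕ := fun j => Nat.rec f₀ next j
  have hgood : ∀ j, Measurable (f j) ∧ ∀ x, (F x ∩ ball (u (f j x)) ((1 / 2) ^ j)).Nonempty := by
    intro j
    induction j with
    | zero => exact ⟨hf₀, fun x => by rw [pow_zero]; exact hf₀F x⟩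
    | succ j ih => exact ⟨hnext_meas j _ ih.1 ih.2, hnextF j _ ih.1 ih.2⟩
  refine ⟨f, fun j => (hgood j).1, fun j => (hgood j).2, fun j x => ?_⟩
  calc dist (u (f j x)) (u (f (j + 1) x)) ≤ (1 / 2) ^ j + (1 / 2) ^ (j + 1) :=
        (hnext_dist j _ (hgood j).1 (hgood j).2 x).le
    _ ≤ 4 / 2 / 2 ^ j := by
        rw [pow_succ, div_pow, one_pow]
        field_simp
        norm_num

/-- Kuratowski–Ryll-Nardzewski: the selection is the limit of points of a dense sequence, the
`j`-th chosen measurably within `2⁻ʲ` of `F x` and within `2 · 2⁻ʲ` of the previous one. -/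
theorem exists_measurable_selection [CompleteSpace X] [TopologicalSpace.SeparableSpace X]
    [MeasurableSpace X] [BorelSpace X] (hne : ∀ x, (F x).Nonempty) (hcl : ∀ x, IsClosed (F x))
    (hF : ∀ y r, MeasurableSet {x | (F x ∩ ball y r).Nonempty}) :
    ∃ ρ : A → X, Measurable ρ ∧ ∀ x, ρ x ∈ F x := by
  rcases isEmpty_or_nonempty A with hA | ⟨⟨x₀⟩⟩
  · exact ⟨isEmptyElim, measurable_of_empty _, isEmptyElim⟩
  have : Nonempty X := ⟨(hne x₀).some⟩
  obtain ⟨u, hu⟩ := TopologicalSpace.exists_dense_seq X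
  obtain ⟨f, hfm, hfF, hfdist⟩ := exists_measurable_approx_seq hu hne hF
  choose ρ hρ using fun x =>
    cauchySeq_tendsto_of_complete (cauchySeq_of_le_geometric_two (hfdist · x))
  refine ⟨ρ, measurable_of_tendsto_metrizable (fun j => measurable_from_nat.comp (hfm j))
    (tendsto_pi_nhds.2 hρ), fun x => ?_⟩
  choose c hcF hcu using fun j => hfF j x
  refine (hcl x).mem_of_tendsto ((hρ x).congr_dist ?_) (Eventually.of_forall hcF)
  exact squeeze_zero (fun j => dist_nonneg) (fun j => (mem_ball'.1 (hcu j)).le)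
    (tendsto_pow_atTop_nhds_zero_of_lt_one (by norm_num) (by norm_num))

end MeasurableSelection

section Argmin

variable {X : Type*} [MetricSpace X] [ProperSpace X]

lemma isMinOn_inter_ball_nonempty_iff {C : Set X} (hC : IsClosed C) {f : X → ℝ}
    (hf : Continuous f) {v : ℕ → C} (hv : DenseRange v) (y : X) (r : ℝ) :
    ({c ∈ C | IsMinOn f C c} ∩ ball y r).Nonempty ↔
      ∃ q : ℚ, (q : ℝ) < r ∧ ∀ n : ℕ, ∃ k, dist (v k : X) y < q ∧
        ∀ l, f (v k) < f (v l) + 1 / (n + 1) := by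
  constructor
  · rintro ⟨c, ⟨hcC, hmin⟩, hcy⟩
    obtain ⟨q, hcq, hqr⟩ := exists_rat_btwn (mem_ball.1 hcy)
    refine ⟨q, hqr, fun n => ?_⟩
    have hU : IsOpen {z : C | dist (z : X) y < q ∧ f z < f c + 1 / (n + 1)} :=
      (isOpen_lt (continuous_subtype_val.dist continuous_const) continuous_const).inter
        (isOpen_lt (hf.comp continuous_subtype_val) continuous_const)
    obtain ⟨k, hkq, hkf⟩ :=
      hv.exists_mem_open hU ⟨⟨c, hcC⟩, hcq, lt_add_of_pos_right _ Nat.one_div_pos_of_nat⟩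
    exact ⟨k, hkq, fun l => hkf.trans_le (by gcongr; exact isMinOn_iff.1 hmin _ (v l).2)⟩
  · rintro ⟨q, hqr, hq⟩
    -- A minimiser of `f` on the compact set `C ∩ closedBall y q` is below every `f (v l)`.
    obtain ⟨k₀, hk₀, -⟩ := hq 0
    obtain ⟨c, ⟨hcC, hcq⟩, hcmin⟩ := ((isCompact_closedBall y q).inter_left hC).exists_isMinOn
      ⟨v k₀, (v k₀).2, mem_closedBall.2 hk₀.le⟩ hf.continuousOn
    have hle : ∀ l, f c ≤ f (v l) := fun l => le_of_forall_pos_lt_add fun ε hε => by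
      obtain ⟨n, hn⟩ := exists_nat_one_div_lt hε
      obtain ⟨k, hkq, hk⟩ := hq n
      calc f c ≤ f (v k) := isMinOn_iff.1 hcmin _ ⟨(v k).2, mem_closedBall.2 hkq.le⟩
        _ < f (v l) + 1 / (n + 1) := hk l
        _ < f (v l) + ε := by gcongr
    refine ⟨c, ⟨hcC, isMinOn_iff.2 fun c' hc' => ?_⟩,
      mem_ball.2 ((mem_closedBall.1 hcq).trans_lt hqr)⟩
    exact hv.induction_on (p := fun z : C => f c ≤ f z) ⟨c', hc'⟩
      (isClosed_le continuous_const (hf.comp continuous_subtype_val)) hle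

variable {A : Type*} [MeasurableSpace A]

lemma measurableSet_isMinOn_inter_ball_nonempty {C : Set X} (hCne : C.Nonempty)
    (hC : IsClosed C) {g : A → X → ℝ} (hgm : ∀ c, Measurable fun x => g x c)
    (hgc : ∀ x, Continuous (g x)) (y : X) (r : ℝ) :
    MeasurableSet {x | ({c ∈ C | IsMinOn (g x) C c} ∩ ball y r).Nonempty} := by
  have := hCne.to_subtype
  obtain ⟨v, hv⟩ := TopologicalSpace.exists_dense_seq C
  simp only [isMinOn_inter_ball_nonempty_iff hC (hgc _) hv]
  simp only [ofPred_exists, ofPred_and, ofPred_forall]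
  exact .iUnion fun q => (MeasurableSet.const _).inter <| .iInter fun n => .iUnion fun k =>
    (MeasurableSet.const _).inter <| .iInter fun l =>
      measurableSet_lt (hgm _) ((hgm _).add_const _)

theorem exists_measurable_isMinOn [MeasurableSpace X] [BorelSpace X] {C : Set X}
    (hCne : C.Nonempty) (hC : IsClosed C) {g : A → X → ℝ} (hgm : ∀ c, Measurable fun x => g x c)
    (hgc : ∀ x, Continuous (g x)) (hcoer : ∀ x, Tendsto (g x) (cocompact X) atTop) :
    ∃ ρ : A → X, Measurable ρ ∧ ∀ x, ρ x ∈ C ∧ IsMinOn (g x) C (ρ x) := by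
  obtain ⟨c₀, hc₀⟩ := hCne
  refine exists_measurable_selection (F := fun x => {c ∈ C | IsMinOn (g x) C c})
    (fun x => ?_) (fun x => ?_) (measurableSet_isMinOn_inter_ball_nonempty ⟨c₀, hc₀⟩ hC hgm hgc)
  · exact (hgc x).continuousOn.exists_isMinOn' hC hc₀
      (((hcoer x).eventually_ge_atTop (g x c₀)).filter_mono inf_le_left)
  · have : {c ∈ C | IsMinOn (g x) C c} = C ∩ ⋂ c' ∈ C, {c | g x c ≤ g x c'} := by
      ext; simp [isMinOn_iff]
    rw [this]
    exact hC.inter (isClosed_biInter fun c' _ => isClosed_le (hgc x) continuous_const)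

end Argmin

lemma Measurable.toEuclideanLin_apply {A m n : Type*} [MeasurableSpace A] [Fintype m]
    [Fintype n] [DecidableEq n] {M : A → Matrix m n ℝ} (hM : ∀ i j, Measurable fun x => M x i j)
    {v : A → EuclideanSpace ℝ n} (hv : Measurable v) :
    Measurable fun x => Matrix.toEuclideanLin (M x) (v x) := by
  simp only [Matrix.toLpLin_apply]
  exact (WithLp.measurable_toLp _ _).comp <| measurable_pi_lambda _ fun i =>
    Finset.measurable_sum _ fun j _ =>
      (hM i j).mul ((measurable_pi_apply j).comp ((WithLp.measurable_ofLp _ _).comp hv))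

lemma tendsto_dist_cocompact_atTop_of_le_norm {E F : Type*} [NormedAddCommGroup E]
    [ProperSpace E] [NormedAddCommGroup F] {T : E → F} {ε : ℝ} (hε : 0 < ε)
    (hT : ∀ v, ε * ‖v‖ ≤ ‖T v‖) (b : F) :
    Tendsto (fun v => dist b (T v)) (cocompact E) atTop := by
  refine tendsto_atTop_mono (fun v => ?_)
    (tendsto_atTop_add_const_right _ (-‖b‖) (tendsto_norm_cocompact_atTop.const_mul_atTop hε))
  have := norm_sub_norm_le (T v) b
  rw [dist_comm, dist_eq_norm]
  linarith [hT v]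

lemma dist_eq_infDist_image_of_isMinOn {α β : Type*} [PseudoMetricSpace α] {T : β → α}
    {C : Set β} {b : α} {c : β} (hc : c ∈ C) (hmin : IsMinOn (fun z => dist b (T z)) C c) :
    dist b (T c) = infDist b (T '' C) :=
  le_antisymm
    ((le_infDist ⟨_, mem_image_of_mem T hc⟩).2 <| forall_mem_image.2 <| isMinOn_iff.1 hmin)
    (infDist_le_dist_of_mem (mem_image_of_mem T hc))

/-- Measurable selection of a nearest point: under uniform ellipticity of `σ`,
there is a measurable `ρ̂` with `ρ̂ x ∈ σ(x)ᵀ C̃` attaining the distance from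
`θ(x)` to `σ(x)ᵀ C̃`; moreover if `θ` is bounded by `M` and `σᵀ` by `K`, then
`‖ρ̂ x‖ ≤ 2M + K‖c₀‖` for any fixed `c₀ ∈ C̃`. -/
theorem optimal_constrained_portfolio_selection
    {A : Type*} [MeasurableSpace A] (n d : ℕ)
    (θ : A → EuclideanSpace ℝ (Fin n)) (hθ : Measurable θ)
    (σ : A → Matrix (Fin d) (Fin n) ℝ)
    (hσ : ∀ i j, Measurable fun x => σ x i j)
    (Ctil : Set (EuclideanSpace ℝ (Fin d)))
    (hCne : Ctil.Nonempty) (hCcl : IsClosed Ctil)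
    (ε : ℝ) (hε : 0 < ε)
    (hell : ∀ x, ∀ v : EuclideanSpace ℝ (Fin d),
      ε * ‖v‖ ≤ ‖Matrix.toEuclideanLin (σ x)ᵀ v‖) :
    ∃ ρ : A → EuclideanSpace ℝ (Fin n),
      Measurable ρ ∧
      (∀ x, ρ x ∈ (fun c => Matrix.toEuclideanLin (σ x)ᵀ c) '' Ctil ∧
        ‖ρ x - θ x‖ =
          Metric.infDist (θ x)
            ((fun c => Matrix.toEuclideanLin (σ x)ᵀ c) '' Ctil)) ∧
      (∀ M K : ℝ, 0 < M → 0 < K →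
        (∀ x, ‖θ x‖ ≤ M) →
        (∀ x, ∀ v : EuclideanSpace ℝ (Fin d),
          ‖Matrix.toEuclideanLin (σ x)ᵀ v‖ ≤ K * ‖v‖) →
        ∀ c₀ ∈ Ctil, ∀ x, ‖ρ x‖ ≤ 2 * M + K * ‖c₀‖) := by
  set T : A → EuclideanSpace ℝ (Fin d) → EuclideanSpace ℝ (Fin n) :=
    fun x c => Matrix.toEuclideanLin (σ x)ᵀ c
  have hσT : ∀ i j, Measurable fun x => (σ x)ᵀ i j := fun i j => hσ j i
  obtain ⟨ρ, hρ_meas, hρ⟩ := exists_measurable_isMinOn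
    (g := fun x c => dist (θ x) (T x c)) hCne hCcl
    (fun c => hθ.dist (measurable_const.toEuclideanLin_apply hσT))
    (fun x => continuous_const.dist (LinearMap.continuous_of_finiteDimensional _))
    (fun x => tendsto_dist_cocompact_atTop_of_le_norm hε (hell x) (θ x))
  refine ⟨fun x => T x (ρ x), hρ_meas.toEuclideanLin_apply hσT,
    fun x => ⟨mem_image_of_mem _ (hρ x).1, ?_⟩, ?_⟩
  · rw [← dist_eq_norm, dist_comm]
    exact dist_eq_infDist_image_of_isMinOn (hρ x).1 (hρ x).2
  · intro M K _ _ hθM hσK c₀ hc₀ x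
    calc ‖T x (ρ x)‖ ≤ ‖θ x‖ + dist (θ x) (T x (ρ x)) := by
          rw [dist_comm, dist_eq_norm]; exact norm_le_norm_add_norm_sub' _ _
      _ ≤ M + dist (θ x) (T x c₀) := add_le_add (hθM x) (isMinOn_iff.1 (hρ x).2 c₀ hc₀)
      _ ≤ M + (‖θ x‖ + ‖T x c₀‖) := by gcongr; exact dist_le_norm_add_norm _ _
      _ ≤ 2 * M + K * ‖c₀‖ := by linarith [hθM x, hσK x c₀]
end

section
/- Let n ≥ 1, let r, R ∈ ℝ with r ≤ R, and let θ, a ∈ ℝⁿ. Define b : ℝ × ℝⁿ → ℝ by b(y,z) = −ry − θ·z + (R − r)·max(a·z − y, 0) (so that the last term is (R−r) times the negative part of y − a·z). Then for every (β,γ) ∈ ℝ × ℝⁿ: if −R ≤ β ≤ −r and γ = −θ − (β + r)a, then sup_{(y,z) ∈ ℝ × ℝⁿ} ( βy + γ·z − b(y,z) ) = 0; otherwise sup_{(y,z) ∈ ℝ × ℝⁿ} ( βy + γ·z − b(y,z) ) = +∞. -/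
open scoped RealInnerProductSpace
open Set Filter

/-!
With `s = y - ⟪a, z⟫` (the cash position), the objective `βy + ⟪γ, z⟫ - b(y, z)` equals
`⟪γ + θ + (β + r) • a, z⟫ + (β + r) s + (R - r) min(s, 0)`, and `(y, z) ↦ (s, z)` is a bijection.
A nonzero linear form is unbounded, and the piecewise-linear function of `s`, with slope `β + R`
on `s ≤ 0` and `β + r` on `s ≥ 0`, is bounded above exactly when `β ∈ [-R, -r]`, in which case
it is `≤ 0`. So the supremum is `+∞` off the stated set and `0` (attained at the origin) on it.
-/

theorem EReal.iSup_coe_eq_top_of_not_bddAbove {ι : Sort*} {f : ι → ℝ}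
    (hf : ¬BddAbove (range f)) : ⨆ i, (f i : EReal) = ⊤ := by
  refine iSup_eq_top.2 fun x hx => ?_
  obtain ⟨M, hxM, -⟩ := EReal.lt_iff_exists_real_btwn.1 hx
  obtain ⟨_, ⟨i, rfl⟩, hMi⟩ := not_bddAbove_iff.1 hf M
  exact ⟨i, hxM.trans (EReal.coe_lt_coe_iff.2 hMi)⟩

section Kink

variable {c d : ℝ}

theorem mul_add_mul_min_zero_nonpos (hc : c ≤ 0) (hcd : 0 ≤ c + d) (s : ℝ) :
    c * s + d * min s 0 ≤ 0 := by
  rcases le_total s 0 with hs | hs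
  · rw [min_eq_left hs]; nlinarith
  · rw [min_eq_right hs]; nlinarith

theorem bddAbove_range_mul_add_mul_min_zero_iff :
    BddAbove (range fun s => c * s + d * min s 0) ↔ c ≤ 0 ∧ 0 ≤ c + d := by
  refine ⟨fun h => ⟨?_, ?_⟩, fun ⟨hc, hcd⟩ => ⟨0, ?_⟩⟩
  · by_contra! hc
    refine not_bddAbove_of_tendsto_atTop (l := atTop) ?_ h
    refine (tendsto_id.const_mul_atTop hc).congr' ?_
    filter_upwards [eventually_ge_atTop 0] with s hs
    simp [min_eq_right hs]
  · by_contra! hcd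
    refine not_bddAbove_of_tendsto_atTop (l := atBot) ?_ h
    refine (tendsto_id.const_mul_atBot_of_neg hcd).congr' ?_
    filter_upwards [eventually_le_atBot 0] with s hs
    rw [id, min_eq_left hs]; ring
  · rintro _ ⟨s, rfl⟩
    exact mul_add_mul_min_zero_nonpos hc hcd s

end Kink

section InnerProductSpace

variable {E : Type*} [NormedAddCommGroup E] [InnerProductSpace ℝ E]

theorem inner_right_surjective {v : E} (hv : v ≠ 0) : Function.Surjective fun z : E => ⟪v, z⟫ :=
  fun t => ⟨(t / ⟪v, v⟫) • v, by
  dsimp only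
  rw [real_inner_smul_right, div_mul_cancel₀ _ (real_inner_self_pos.2 hv).ne']⟩

theorem bddAbove_range_inner_add_comp_iff (v a : E) (ψ : ℝ → ℝ) :
    BddAbove (range fun p : ℝ × E => ⟪v, p.2⟫ + ψ (p.1 - ⟪a, p.2⟫)) ↔
      v = 0 ∧ BddAbove (range ψ) := by
  constructor
  · intro h
    refine ⟨?_, ?_⟩
    · by_contra hv
      refine not_bddAbove_univ (h.mono fun t _ => ?_)
      obtain ⟨z, hz⟩ := inner_right_surjective hv (t - ψ 0)
      exact ⟨(⟪a, z⟫, z), by simp [hz]⟩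
    · refine h.mono ?_
      rintro _ ⟨s, rfl⟩
      exact ⟨(s, 0), by simp⟩
  · rintro ⟨rfl, M, hM⟩
    refine ⟨M, ?_⟩
    rintro _ ⟨p, rfl⟩
    simpa using hM (mem_range_self _)

theorem mul_add_inner_sub_driver_eq (r R β y : ℝ) (θ a γ z : E) :
    β * y + ⟪γ, z⟫ - (-(r * y) - ⟪θ, z⟫ + (R - r) * max (⟪a, z⟫ - y) 0) =
      ⟪γ + θ + (β + r) • a, z⟫ + ((β + r) * (y - ⟪a, z⟫) + (R - r) * min (y - ⟪a, z⟫) 0) := by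
  have : max (⟪a, z⟫ - y) 0 = -min (y - ⟪a, z⟫) 0 := by rw [← max_neg_neg, neg_sub, neg_zero]
  rw [this, inner_add_left, inner_add_left, real_inner_smul_left]
  ring

end InnerProductSpace

theorem conjugate_of_borrowing_driver_general
    (n : ℕ) (r R : ℝ)
    (θ a : EuclideanSpace ℝ (Fin n))
    (b : ℝ → EuclideanSpace ℝ (Fin n) → ℝ)
    (hb : ∀ y z, b y z = -(r * y) - ⟪θ, z⟫ + (R - r) * max (⟪a, z⟫ - y) 0)
    (β : ℝ) (γ : EuclideanSpace ℝ (Fin n)) :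
    ((-R ≤ β ∧ β ≤ -r ∧ γ = -θ - (β + r) • a) →
      (⨆ p : ℝ × EuclideanSpace ℝ (Fin n),
        ((β * p.1 + ⟪γ, p.2⟫ - b p.1 p.2 : ℝ) : EReal)) = 0) ∧
    (¬(-R ≤ β ∧ β ≤ -r ∧ γ = -θ - (β + r) • a) →
      (⨆ p : ℝ × EuclideanSpace ℝ (Fin n),
        ((β * p.1 + ⟪γ, p.2⟫ - b p.1 p.2 : ℝ) : EReal)) = ⊤) := by
  set v := γ + θ + (β + r) • a with hv
  set ψ : ℝ → ℝ := fun s => (β + r) * s + (R - r) * min s 0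
  have hF : (fun p : ℝ × EuclideanSpace ℝ (Fin n) => β * p.1 + ⟪γ, p.2⟫ - b p.1 p.2) =
      fun p => ⟪v, p.2⟫ + ψ (p.1 - ⟪a, p.2⟫) :=
    funext fun p => by rw [hb]; exact mul_add_inner_sub_driver_eq r R β p.1 θ a γ p.2
  have hdom : (-R ≤ β ∧ β ≤ -r ∧ γ = -θ - (β + r) • a) ↔
      v = 0 ∧ β + r ≤ 0 ∧ 0 ≤ β + r + (R - r) := by
    rw [hv, add_assoc, add_eq_zero_iff_eq_neg, neg_add, ← sub_eq_add_neg]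
    constructor
    · rintro ⟨h₁, h₂, h₃⟩; exact ⟨h₃, by linarith, by linarith⟩
    · rintro ⟨h₃, h₂, h₁⟩; exact ⟨by linarith, by linarith, h₃⟩
  constructor
  · intro hD
    obtain ⟨hv0, hc, hcd⟩ := hdom.1 hD
    have hle (p : ℝ × EuclideanSpace ℝ (Fin n)) : β * p.1 + ⟪γ, p.2⟫ - b p.1 p.2 ≤ 0 := by
      rw [congrFun hF p, hv0, inner_zero_left, zero_add]
      exact mul_add_mul_min_zero_nonpos hc hcd _
    refine le_antisymm (iSup_le fun p => EReal.coe_nonpos.2 (hle p)) (le_iSup_of_le (0, 0) ?_)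
    simp [hb]
  · intro hD
    refine EReal.iSup_coe_eq_top_of_not_bddAbove ?_
    rwa [hF, bddAbove_range_inner_add_comp_iff, bddAbove_range_mul_add_mul_min_zero_iff, ← hdom]

/-- Convex conjugate of the driver of the wealth equation in a market with a
higher interest rate `R` for borrowing: the conjugate
`B(β,γ) = sup_{(y,z)} (βy + γ·z − b(y,z))` vanishes when `β ∈ [−R, −r]` and
`γ = −θ − (β + r)a`, and is `+∞` otherwise. -/
theorem conjugate_of_borrowing_driver
    (n : ℕ) (hn : 1 ≤ n) (r R : ℝ) (hrR : r ≤ R)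
    (θ a : EuclideanSpace ℝ (Fin n))
    (b : ℝ → EuclideanSpace ℝ (Fin n) → ℝ)
    (hb : ∀ y z, b y z = -(r * y) - ⟪θ, z⟫ + (R - r) * max (⟪a, z⟫ - y) 0)
    (β : ℝ) (γ : EuclideanSpace ℝ (Fin n)) :
    ((-R ≤ β ∧ β ≤ -r ∧ γ = -θ - (β + r) • a) →
      (⨆ p : ℝ × EuclideanSpace ℝ (Fin n),
        ((β * p.1 + ⟪γ, p.2⟫ - b p.1 p.2 : ℝ) : EReal)) = 0) ∧
    (¬(-R ≤ β ∧ β ≤ -r ∧ γ = -θ - (β + r) • a) →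
      (⨆ p : ℝ × EuclideanSpace ℝ (Fin n),
        ((β * p.1 + ⟪γ, p.2⟫ - b p.1 p.2 : ℝ) : EReal)) = ⊤) :=
  conjugate_of_borrowing_driver_general n r R θ a b hb β γ
end
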